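/- arXiv:2504.16762 — 2 statements merged into one kernel-verified Lean document; each statement's English description precedes it below -/
import Mathlib

section
/- Let T be a minimum-weight spanning arborescence converging to the root r in the extended large tilt graph of a board with sinks S. If (p₁, q) and (p₂, q) are two distinct inverse edges of T with the same head q, then q ∈ S (q is a sink). -/
open Classical in
/-- The four tilt directions: right, left, up, down. -/
def dirs : Finset (ℤ × ℤ) := {(1, 0), (-1, 0), (0, 1), (0, -1)}

/-- `TiltEnd B p d q`: starting at pixel `p` of the board `B` and moving in
direction `d`, the particle comes to rest at `q`, i.e. `q = p^d` is the extreme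
pixel of the maximal segment through `p` in direction `d`. -/
def TiltEnd (B : Finset (ℤ × ℤ)) (p d q : ℤ × ℤ) : Prop :=
  (∃ n : ℕ, q = p + n • d ∧ ∀ m : ℕ, m ≤ n → p + m • d ∈ B) ∧ q + d ∉ B

/-- The full tilt graph of a board `B`: edges `(p, p^x)` for each direction. -/
def GF (B : Finset (ℤ × ℤ)) (p q : ℤ × ℤ) : Prop :=
  p ∈ B ∧ ∃ d ∈ dirs, TiltEnd B p d q

/-- `p` and `q` lie in a common (maximal horizontal) row segment of `B`. -/
def SameRow (B : Finset (ℤ × ℤ)) (p q : ℤ × ℤ) : Prop :=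
  p ∈ B ∧ q ∈ B ∧ p.2 = q.2 ∧
    ∀ x : ℤ, min p.1 q.1 ≤ x → x ≤ max p.1 q.1 → (x, p.2) ∈ B

/-- `p` and `q` lie in a common (maximal vertical) column segment of `B`. -/
def SameCol (B : Finset (ℤ × ℤ)) (p q : ℤ × ℤ) : Prop :=
  p ∈ B ∧ q ∈ B ∧ p.1 = q.1 ∧
    ∀ y : ℤ, min p.2 q.2 ≤ y → y ≤ max p.2 q.2 → (p.1, y) ∈ B

/-- `R` is an axis-aligned rectangle of pixels whose upper-right cell is `a`. -/
def IsRect (R : Set (ℤ × ℤ)) (a : ℤ × ℤ) : Prop :=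
  ∃ x₁ y₁ : ℤ, x₁ ≤ a.1 ∧ y₁ ≤ a.2 ∧
    R = {v | x₁ ≤ v.1 ∧ v.1 ≤ a.1 ∧ y₁ ≤ v.2 ∧ v.2 ≤ a.2}

/-- `a` is the anchor `p†` of `p`: `a` is the unique vertex of the large tilt
graph vertex set `VL` in a rectangle of pixels of `B` containing `p`, adjacent
on the inside to the rectangle's upper-right corner. -/
def IsAnchor (B : Finset (ℤ × ℤ)) (VL : Set (ℤ × ℤ)) (p a : ℤ × ℤ) : Prop :=
  a ∈ VL ∧ ∃ R : Set (ℤ × ℤ), IsRect R a ∧ R ⊆ ↑B ∧ p ∈ R ∧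
    ∀ v ∈ R, v ∈ VL → v = a

/-- `VL` is a valid vertex set for the large tilt graph of board `B` with sinks
`S`: it consists of pixels, contains all sinks, is closed under tilt moves
(so it contains the tilt images of sinks and the segment endpoints it needs),
and is closed under intersections of row and column segments through its
vertices. -/
structure LargeTiltSet (B : Finset (ℤ × ℤ)) (S VL : Set (ℤ × ℤ)) : Prop where
  subset : VL ⊆ ↑B
  sinks : S ⊆ VL
  tiltClosed : ∀ v ∈ VL, ∀ d ∈ dirs, ∀ q, TiltEnd B v d q → q ∈ VL
  interClosed : ∀ a ∈ VL, ∀ b ∈ VL, ∀ c, SameRow B a c → SameCol B b c → c ∈ VL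

/-- The large tilt graph: the subgraph of the full tilt graph induced by `VL`. -/
def GLarge (B : Finset (ℤ × ℤ)) (VL : Set (ℤ × ℤ)) (p q : ℤ × ℤ) : Prop :=
  p ∈ VL ∧ q ∈ VL ∧ GF B p q

/-- The extended graph of a graph `G` with sink set `S`, with fresh root
`none`: edges of `G`, inverse edges for missing reverses, and sink-to-root
edges. -/
def ExtR {α : Type*} (G : α → α → Prop) (S : Set α) : Option α → Option α → Prop
  | some p, some q => G p q ∨ (G q p ∧ ¬ G p q)
  | some s, none => s ∈ S
  | none, _ => False

open Classical in
/-- Weights in the extended graph: edges of `G` and sink-to-root edges have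
weight 0, inverse edges have weight 1. -/
noncomputable def wR {α : Type*} (G : α → α → Prop) : α → Option α → ℕ
  | p, some q => if G p q then 0 else 1
  | _, none => 0

/-- One step along the parent function `f`, the root `none` is absorbing. -/
def ostep {α : Type*} (f : α → Option α) : Option α → Option α
  | some v => f v
  | none => none

/-- `f` is a spanning arborescence on the vertex set `D` converging to the
root `none`: every vertex of `D` has its unique outgoing edge in `G` and
reaches the root. -/
def IsArbOn {α : Type*} (D : Finset α) (G : Option α → Option α → Prop)
    (f : α → Option α) : Prop :=
  (∀ v ∈ D, G (some v) (f v)) ∧ ∀ v ∈ D, ∃ n : ℕ, (ostep f)^[n] (some v) = none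

/-- Total weight of an arborescence on vertex set `D`. -/
def weightOn {α : Type*} [DecidableEq α] (D : Finset α) (w : α → Option α → ℕ)
    (f : α → Option α) : ℕ :=
  ∑ v ∈ D, w v (f v)

/-- Minimum-weight spanning arborescence on `D` converging to the root. -/
def IsMinArbOn {α : Type*} [DecidableEq α] (D : Finset α)
    (G : Option α → Option α → Prop) (w : α → Option α → ℕ) (f : α → Option α) : Prop :=
  IsArbOn D G f ∧ ∀ g : α → Option α, IsArbOn D G g → weightOn D w f ≤ weightOn D w g

/-!
Suppose `q` is not a sink. An inverse edge `(p, q)` means that `p` is the tilt image `q^d`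
of `q` while `p` does not tilt back to `q`; this forces both neighbours `q ± d` to be pixels.
If the two directions are opposite, `p₁` tilts directly onto `p₂`, a weight-0 edge which
replaces the inverse edge `(p₁, q)` and lowers the weight. Otherwise all four neighbours
of `q` are pixels, so `q` is no tilt image and its own arborescence edge `(q, q')` is a tilt
edge parallel to one of the `(pᵢ, q)`: either `q' = pᵢ` (a cycle) or `pᵢ` tilts directly onto
`q'`, again lowering the weight.
-/

open Function

section Arborescence

variable {α : Type*} {f : α → Option α}

@[simp] lemma ostep_some (v : α) : ostep f (some v) = f v := rfl

lemma iterate_ostep_none (n : ℕ) : (ostep f)^[n] none = none :=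
  iterate_fixed rfl n

lemma iterate_ostep_ne_self {p : α} {n k : ℕ} (hn : (ostep f)^[n] (some p) = none)
    (hk : 0 < k) : (ostep f)^[k] (some p) ≠ some p := by
  intro hper
  have hmul : (ostep f)^[k * n] (some p) = some p := IsPeriodicPt.mul_const hper n
  have hsplit : k * n = (k * n - n) + n := (Nat.sub_add_cancel (Nat.le_mul_of_pos_left n hk)).symm
  rw [hsplit, iterate_add_apply, hn, iterate_ostep_none] at hmul
  exact Option.some_ne_none p hmul.symm

lemma iterate_ostep_ne_of_ancestor {p u : α} {n k : ℕ} (hn : (ostep f)^[n] (some p) = none)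
    (hk : 0 < k) (hu : (ostep f)^[k] (some p) = some u) (j : ℕ) :
    (ostep f)^[j] (some u) ≠ some p := by
  rw [← hu, ← iterate_add_apply]
  exact iterate_ostep_ne_self hn (by omega)

lemma iterate_ostep_ne_of_sibling {p u : α} {n : ℕ} (hn : (ostep f)^[n] (some p) = none)
    (hne : u ≠ p) (hfu : f u = f p) : ∀ j, (ostep f)^[j] (some u) ≠ some p
  | 0 => fun h => hne (Option.some_injective _ h)
  | j + 1 => by
    have hstep : ostep f (some u) = ostep f (some p) := hfu
    rw [iterate_succ_apply, hstep, ← iterate_succ_apply]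
    exact iterate_ostep_ne_self hn j.succ_pos

variable [DecidableEq α] {p : α} {t v : Option α}

lemma ostep_update_of_ne (hv : v ≠ some p) : ostep (update f p t) v = ostep f v := by
  cases v with
  | none => rfl
  | some u => exact update_of_ne (fun h => hv (congrArg some h)) t f

lemma iterate_ostep_update_of_forall_ne (hv : ∀ j, (ostep f)^[j] v ≠ some p) (n : ℕ) :
    (ostep (update f p t))^[n] v = (ostep f)^[n] v := by
  induction n generalizing v with
  | zero => rfl
  | succ n ih =>
    have hv0 : v ≠ some p := hv 0
    rw [iterate_succ_apply, iterate_succ_apply, ostep_update_of_ne hv0]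
    exact ih fun j => by simpa only [← iterate_succ_apply] using hv (j + 1)

lemma exists_iterate_ostep_update_eq_none
    (hp : ∃ m, (ostep (update f p t))^[m] (some p) = none) {n : ℕ}
    (hn : (ostep f)^[n] v = none) : ∃ m, (ostep (update f p t))^[m] v = none := by
  induction n generalizing v with
  | zero => exact ⟨0, hn⟩
  | succ n ih =>
    by_cases hvp : v = some p
    · exact hvp ▸ hp
    · rw [iterate_succ_apply] at hn
      obtain ⟨m, hm⟩ := ih hn
      exact ⟨m + 1, by rwa [iterate_succ_apply, ostep_update_of_ne hvp]⟩

variable {D : Finset α} {G : Option α → Option α → Prop} {u : α}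

/-- `hpu` says that `u` is not a descendant of `p`. -/
lemma IsArbOn.update (hf : IsArbOn D G f) (hG : G (some p) (some u)) (hu : u ∈ D)
    (hpu : ∀ j, (ostep f)^[j] (some u) ≠ some p) :
    IsArbOn D G (Function.update f p (some u)) := by
  obtain ⟨n, hn⟩ := hf.2 u hu
  have hp : ∃ m, (ostep (Function.update f p (some u)))^[m] (some p) = none :=
    ⟨n + 1, by rw [iterate_succ_apply, ostep_some, update_self,
      iterate_ostep_update_of_forall_ne hpu, hn]⟩
  refine ⟨fun v hv => ?_, fun v hv => ?_⟩
  · by_cases hvp : v = p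
    · subst hvp; rwa [update_self]
    · rw [update_of_ne hvp]; exact hf.1 v hv
  · obtain ⟨m, hm⟩ := hf.2 v hv
    exact exists_iterate_ostep_update_eq_none hp hm

lemma IsMinArbOn.weight_le {w : α → Option α → ℕ} (hmin : IsMinArbOn D G w f) (hp : p ∈ D)
    (hu : u ∈ D) (hG : G (some p) (some u)) (hpu : ∀ j, (ostep f)^[j] (some u) ≠ some p) :
    w p (f p) ≤ w p (some u) := by
  have hle := hmin.2 _ (hmin.1.update hG hu hpu)
  have hrest : ∑ v ∈ D.erase p, w v (update f p (some u) v) = ∑ v ∈ D.erase p, w v (f v) :=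
    Finset.sum_congr rfl fun v hv => by rw [update_of_ne (Finset.ne_of_mem_erase hv)]
  unfold weightOn at hle
  rw [← Finset.add_sum_erase D _ hp, ← Finset.add_sum_erase D _ hp, hrest, update_self] at hle
  omega

lemma IsMinArbOn.not_adj_of_inverse {G : α → α → Prop} {S : Set α} {q : α}
    (hmin : IsMinArbOn D (ExtR G S) (wR G) f) (hp : p ∈ D) (hfp : f p = some q)
    (hpq : ¬ G p q) (hu : u ∈ D) (hpu : ∀ j, (ostep f)^[j] (some u) ≠ some p) :
    ¬ G p u := by
  intro hG
  have := hmin.weight_le hp hu (Or.inl hG) hpu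
  simp [wR, hfp, hpq, hG] at this

end Arborescence

section Tilt

variable {B : Finset (ℤ × ℤ)} {p q t d : ℤ × ℤ}

lemma neg_mem_dirs (h : d ∈ dirs) : -d ∈ dirs := by
  fin_cases h <;> decide

lemma mem_dirs_cases {d₁ d₂ e : ℤ × ℤ} (h₁ : d₁ ∈ dirs) (h₂ : d₂ ∈ dirs) (he : e ∈ dirs)
    (hne : d₁ ≠ d₂) (hne' : d₂ ≠ -d₁) : (e = d₁ ∨ e = -d₁) ∨ (e = d₂ ∨ e = -d₂) := by
  fin_cases h₁ <;> fin_cases h₂ <;> fin_cases he <;> revert hne hne' <;> decide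

lemma TiltEnd.mem (h : TiltEnd B q d p) : p ∈ B := by
  obtain ⟨⟨n, rfl, hseg⟩, -⟩ := h
  exact hseg n le_rfl

lemma TiltEnd.unique {p' : ℤ × ℤ} (h : TiltEnd B q d p) (h' : TiltEnd B q d p') :
    p = p' := by
  obtain ⟨⟨n, rfl, hseg⟩, hout⟩ := h
  obtain ⟨⟨n', rfl, hseg'⟩, hout'⟩ := h'
  have h₁ : ¬ n < n' := fun hlt => hout (by rw [add_assoc, ← succ_nsmul]; exact hseg' _ hlt)
  have h₂ : ¬ n' < n := fun hlt => hout' (by rw [add_assoc, ← succ_nsmul]; exact hseg _ hlt)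
  rw [show n = n' by omega]

lemma tiltEnd_self (hq : q ∈ B) (hout : q + d ∉ B) : TiltEnd B q d q :=
  ⟨⟨0, by simp, fun m hm => by simpa [Nat.le_zero.mp hm] using hq⟩, hout⟩

lemma TiltEnd.tiltEnd_neg (h : TiltEnd B q d p) (h' : TiltEnd B q (-d) t) :
    TiltEnd B p (-d) t := by
  obtain ⟨⟨n, rfl, hseg⟩, -⟩ := h
  obtain ⟨⟨k, rfl, hseg'⟩, hout⟩ := h'
  refine ⟨⟨n + k, by module, fun m hm => ?_⟩, hout⟩
  rcases le_total m n with hmn | hnm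
  · obtain ⟨j, rfl⟩ := Nat.exists_eq_add_of_le hmn
    have hpt : q + (m + j) • d + m • -d = q + j • d := by module
    exact hpt ▸ hseg j (by omega)
  · obtain ⟨j, rfl⟩ := Nat.exists_eq_add_of_le hnm
    have hpt : q + n • d + (n + j) • -d = q + j • -d := by module
    exact hpt ▸ hseg' j (by omega)

lemma TiltEnd.add_mem_and_add_neg_mem (hq : q ∈ B) (hd : d ∈ dirs) (h : TiltEnd B q d p)
    (hpq : ¬ GF B p q) : q + d ∈ B ∧ q + -d ∈ B := by
  refine ⟨by_contra fun hout => ?_, by_contra fun hout => ?_⟩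
  · obtain rfl := h.unique (tiltEnd_self hq hout)
    exact hpq ⟨hq, d, hd, h⟩
  · exact hpq ⟨h.mem, -d, neg_mem_dirs hd, h.tiltEnd_neg (tiltEnd_self hq hout)⟩

lemma not_GF_of_forall_add_mem (h : ∀ e ∈ dirs, q + e ∈ B) : ¬ GF B p q :=
  fun ⟨_, e, he, hT⟩ => hT.2 (h e he)

end Tilt

section LargeTiltGraph

variable {B S VL : Finset (ℤ × ℤ)} {f : ℤ × ℤ → Option (ℤ × ℤ)} {p q u d : ℤ × ℤ}

lemma not_GF_of_not_GLarge (hp : p ∈ VL) (hq : q ∈ VL) (h : ¬ GLarge B ↑VL p q) : ¬ GF B p q :=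
  fun hGF => h ⟨hp, hq, hGF⟩

/-- `p` tilts onto `u` as well, so it could hang on `u` at weight 0. -/
lemma false_of_inverse_of_tiltEnd_neg
    (hmin : IsMinArbOn VL (ExtR (GLarge B ↑VL) ↑S) (wR (GLarge B ↑VL)) f)
    (hp : p ∈ VL) (hfp : f p = some q) (hpq : ¬ GLarge B ↑VL p q) (hd : d ∈ dirs)
    (hT : TiltEnd B q d p) (hu : u ∈ VL) (hTu : TiltEnd B q (-d) u)
    (hpu : ∀ j, (ostep f)^[j] (some u) ≠ some p) : False :=
  hmin.not_adj_of_inverse hp hfp hpq hu hpu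
    ⟨hp, hu, hT.mem, -d, neg_mem_dirs hd, hT.tiltEnd_neg hTu⟩

lemma false_of_inverse_of_parent_parallel {q' e : ℤ × ℤ}
    (hmin : IsMinArbOn VL (ExtR (GLarge B ↑VL) ↑S) (wR (GLarge B ↑VL)) f)
    (hp : p ∈ VL) (hfp : f p = some q) (hpq : ¬ GLarge B ↑VL p q) (hd : d ∈ dirs)
    (hT : TiltEnd B q d p) (hfq : f q = some q') (hq' : q' ∈ VL) (hTe : TiltEnd B q e q')
    (he : e = d ∨ e = -d) : False := by
  obtain ⟨n, hn⟩ := hmin.1.2 p hp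
  have hgrand : (ostep f)^[2] (some p) = some q' := by
    simp only [iterate_succ_apply, iterate_zero_apply, ostep_some, hfp, hfq]
  rcases he with rfl | rfl
  · obtain rfl := hTe.unique hT
    exact iterate_ostep_ne_self hn two_pos hgrand
  · exact false_of_inverse_of_tiltEnd_neg hmin hp hfp hpq hd hT hq' hTe
      (iterate_ostep_ne_of_ancestor hn two_pos hgrand)

end LargeTiltGraph

theorem stmt9_general (B S VL : Finset (ℤ × ℤ))
    (f : ℤ × ℤ → Option (ℤ × ℤ))
    (hmin : IsMinArbOn VL (ExtR (GLarge B ↑VL) ↑S) (wR (GLarge B ↑VL)) f)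
    (p₁ p₂ q : ℤ × ℤ) (hne : p₁ ≠ p₂)
    (he₁ : f p₁ = some q) (he₂ : f p₂ = some q)
    (hinv₁ : GLarge B ↑VL q p₁ ∧ ¬ GLarge B ↑VL p₁ q)
    (hinv₂ : GLarge B ↑VL q p₂ ∧ ¬ GLarge B ↑VL p₂ q) :
    q ∈ S := by
  obtain ⟨⟨hq, hp₁, hqB, d₁, hd₁, hT₁⟩, hn₁⟩ := hinv₁
  obtain ⟨⟨-, hp₂, -, d₂, hd₂, hT₂⟩, hn₂⟩ := hinv₂
  have hdne : d₁ ≠ d₂ := by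
    rintro rfl
    exact hne (hT₁.unique hT₂)
  by_cases hopp : d₂ = -d₁
  · subst hopp
    obtain ⟨n, hn⟩ := hmin.1.2 p₁ hp₁
    exact (false_of_inverse_of_tiltEnd_neg hmin hp₁ he₁ hn₁ hd₁ hT₁ hp₂ hT₂
      (iterate_ostep_ne_of_sibling hn hne.symm (he₂.trans he₁.symm))).elim
  have hnbrs : ∀ e ∈ dirs, q + e ∈ B := by
    obtain ⟨h₁, h₁'⟩ := hT₁.add_mem_and_add_neg_mem hqB hd₁ (not_GF_of_not_GLarge hp₁ hq hn₁)
    obtain ⟨h₂, h₂'⟩ := hT₂.add_mem_and_add_neg_mem hqB hd₂ (not_GF_of_not_GLarge hp₂ hq hn₂)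
    intro e he
    rcases mem_dirs_cases hd₁ hd₂ he hdne hopp with (rfl | rfl) | (rfl | rfl) <;> assumption
  have hedge := hmin.1.1 q hq
  cases hfq : f q with
  | none => rw [hfq] at hedge; exact hedge
  | some q' =>
    rw [hfq] at hedge
    rcases hedge with ⟨-, hq', -, e, he, hTe⟩ | ⟨⟨-, -, hGF⟩, -⟩
    · exfalso
      rcases mem_dirs_cases hd₁ hd₂ he hdne hopp with h | h
      · exact false_of_inverse_of_parent_parallel hmin hp₁ he₁ hn₁ hd₁ hT₁ hfq hq' hTe h
      · exact false_of_inverse_of_parent_parallel hmin hp₂ he₂ hn₂ hd₂ hT₂ hfq hq' hTe h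
    · exact (not_GF_of_forall_add_mem hnbrs hGF).elim

/-- If a minimum-weight arborescence of the extended large tilt graph contains
two distinct inverse edges `(p₁, q)` and `(p₂, q)` with the same head `q`,
then `q` is a sink. -/
theorem stmt9 (B S VL : Finset (ℤ × ℤ))
    (hVL : LargeTiltSet B ↑S ↑VL)
    (f : ℤ × ℤ → Option (ℤ × ℤ))
    (hmin : IsMinArbOn VL (ExtR (GLarge B ↑VL) ↑S) (wR (GLarge B ↑VL)) f)
    (p₁ p₂ q : ℤ × ℤ) (hp₁ : p₁ ∈ VL) (hp₂ : p₂ ∈ VL) (hne : p₁ ≠ p₂)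
    (he₁ : f p₁ = some q) (he₂ : f p₂ = some q)
    (hinv₁ : GLarge B ↑VL q p₁ ∧ ¬ GLarge B ↑VL p₁ q)
    (hinv₂ : GLarge B ↑VL q p₂ ∧ ¬ GLarge B ↑VL p₂ q) :
    q ∈ S :=
  stmt9_general B S VL f hmin p₁ p₂ q hne he₁ he₂ hinv₁ hinv₂
end

section
/- Let φ be a map from the pixels of the k-scaled board B^(k) to the pixels of B sending each sub-pixel to its super-pixel. If the extended full tilt graph of B^(k) has a spanning arborescence converging to its root of weight w, then the extended full tilt graph of B has a spanning arborescence converging to its root of weight at most w. -/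
/-- The `k`-scaled board: every pixel is replaced by a `k × k` block of
sub-pixels. -/
def scaleB (k : ℕ) (B : Finset (ℤ × ℤ)) : Finset (ℤ × ℤ) :=
  B.biUnion fun p => ((Finset.range k) ×ˢ (Finset.range k)).image
    fun ij => ((k : ℤ) * p.1 + (ij.1 : ℤ), (k : ℤ) * p.2 + (ij.2 : ℤ))

/-! Under the super-pixel map `φ p = (p.1 / k, p.2 / k)` a unit step moves `φ p` by zero or one
step in the same direction, so the image of a maximal segment of `B^(k)` is a maximal segment
of `B`: tilts project to tilts. Hence `φ` maps tilt edges to tilt edges and inverse edges to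
inverse or tilt edges, never increasing the weight. To push an arborescence down, let each
super-pixel take the parent of the sub-pixel above it that reaches the root fastest: this
escape time strictly decreases along the new parent map, and distinct super-pixels use distinct
sub-pixels, so the weight does not increase. -/

theorem Int.add_ediv_eq_or {k : ℤ} (hk : 0 < k) (t : ℤ) {e : ℤ} (he : |e| ≤ 1) :
    (t + e) / k = t / k ∨ (t + e) / k = t / k + e := by
  have ht := (Int.ediv_eq_iff_of_pos hk).1 (rfl : t / k = t / k)
  obtain rfl | rfl | rfl : e = -1 ∨ e = 0 ∨ e = 1 := by rw [abs_le] at he; omega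
  all_goals simp only [Int.ediv_eq_iff_of_pos hk, add_mul, neg_one_mul, one_mul, zero_mul]; omega

theorem Int.exists_lt_mul_add_iff {k : ℕ} (hk : 0 < k) (a t : ℤ) :
    (∃ i < k, (k : ℤ) * a + i = t) ↔ t / k = a := by
  rw [Int.ediv_eq_iff_of_pos (by omega), mul_comm a]
  constructor
  · rintro ⟨i, hi, rfl⟩; omega
  · intro h; exact ⟨(t - k * a).toNat, by omega, by omega⟩

theorem exists_eq_add_nsmul_of_steps {M : Type*} [AddMonoid M] (d : M) (s : ℕ → M) (n : ℕ)
    (hs : ∀ i < n, s (i + 1) = s i ∨ s (i + 1) = s i + d) :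
    ∃ n' : ℕ, s n = s 0 + n' • d ∧ ∀ m' ≤ n', ∃ m ≤ n, s m = s 0 + m' • d := by
  induction n with
  | zero => exact ⟨0, by simp, fun m' hm' => ⟨0, le_rfl, by simp [Nat.le_zero.1 hm']⟩⟩
  | succ n ih =>
    obtain ⟨n', hn', hcover⟩ := ih fun i hi => hs i (by omega)
    rcases hs n (by omega) with hstay | hmove
    · exact ⟨n', hstay ▸ hn', fun m' hm' =>
        let ⟨m, hm, hsm⟩ := hcover m' hm'; ⟨m, by omega, hsm⟩⟩
    · refine ⟨n' + 1, by rw [hmove, hn', succ_nsmul, add_assoc], fun m' hm' => ?_⟩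
      rcases Nat.lt_or_eq_of_le hm' with hlt | rfl
      · obtain ⟨m, hm, hsm⟩ := hcover m' (by omega)
        exact ⟨m, by omega, hsm⟩
      · exact ⟨n + 1, le_rfl, by rw [hmove, hn', succ_nsmul, add_assoc]⟩

def superPixel (k : ℕ) (p : ℤ × ℤ) : ℤ × ℤ := (p.1 / k, p.2 / k)

section superPixel

variable {k : ℕ} (hk : 0 < k)
include hk

theorem mem_scaleB_iff {B : Finset (ℤ × ℤ)} {p : ℤ × ℤ} :
    p ∈ scaleB k B ↔ superPixel k p ∈ B := by
  simp only [scaleB, Finset.mem_biUnion, Finset.mem_image, Finset.mem_product,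
    Finset.mem_range, Prod.ext_iff, superPixel]
  constructor
  · rintro ⟨a, ha, ⟨i, j⟩, ⟨hi, hj⟩, h₁, h₂⟩
    rwa [(Int.exists_lt_mul_add_iff hk a.1 p.1).1 ⟨i, hi, h₁⟩,
      (Int.exists_lt_mul_add_iff hk a.2 p.2).1 ⟨j, hj, h₂⟩]
  · intro h
    obtain ⟨i, hi, h₁⟩ := (Int.exists_lt_mul_add_iff hk _ p.1).2 rfl
    obtain ⟨j, hj, h₂⟩ := (Int.exists_lt_mul_add_iff hk _ p.2).2 rfl
    exact ⟨_, h, (i, j), ⟨hi, hj⟩, h₁, h₂⟩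

theorem image_superPixel_scaleB (B : Finset (ℤ × ℤ)) :
    (scaleB k B).image (superPixel k) = B := by
  ext v
  have hv : superPixel k ((k : ℤ) * v.1, (k : ℤ) * v.2) = v := by
    simp [superPixel, Int.mul_ediv_cancel_left _ (by omega : (k : ℤ) ≠ 0)]
  simp only [Finset.mem_image]
  constructor
  · rintro ⟨p, hp, rfl⟩
    exact (mem_scaleB_iff hk).1 hp
  · exact fun h => ⟨_, (mem_scaleB_iff hk).2 (by rwa [hv]), hv⟩

theorem superPixel_add_of_mem_dirs {d : ℤ × ℤ} (hd : d ∈ dirs) (p : ℤ × ℤ) :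
    superPixel k (p + d) = superPixel k p ∨ superPixel k (p + d) = superPixel k p + d := by
  have hk' : (0 : ℤ) < k := by omega
  simp only [dirs, Finset.mem_insert, Finset.mem_singleton] at hd
  rcases hd with rfl | rfl | rfl | rfl <;>
    simp only [superPixel, Prod.fst_add, Prod.snd_add, Prod.mk_add_mk, Prod.mk.injEq,
      add_zero, and_true, true_and]
  all_goals exact Int.add_ediv_eq_or hk' _ (by norm_num)

theorem TiltEnd.map_superPixel {B : Finset (ℤ × ℤ)} {p d q : ℤ × ℤ} (hd : d ∈ dirs)
    (h : TiltEnd (scaleB k B) p d q) : TiltEnd B (superPixel k p) d (superPixel k q) := by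
  obtain ⟨⟨n, rfl, hseg⟩, hstop⟩ := h
  have hstep := superPixel_add_of_mem_dirs hk hd
  obtain ⟨n', hend, hcover⟩ := exists_eq_add_nsmul_of_steps d
    (fun m => superPixel k (p + m • d)) n
    (fun i _ => by simpa only [succ_nsmul, add_assoc] using hstep (p + i • d))
  simp only [zero_smul, add_zero] at hend hcover
  refine ⟨⟨n', hend, fun m' hm' => ?_⟩, fun hout => hstop ?_⟩
  · obtain ⟨m, hm, hsm⟩ := hcover m' hm'
    exact hsm ▸ (mem_scaleB_iff hk).1 (hseg m hm)
  · rw [mem_scaleB_iff hk]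
    rcases hstep (p + n • d) with h | h <;> rw [h]
    · exact (mem_scaleB_iff hk).1 (hseg n le_rfl)
    · exact hout

theorem GF.map_superPixel {B : Finset (ℤ × ℤ)} {p q : ℤ × ℤ} (h : GF (scaleB k B) p q) :
    GF B (superPixel k p) (superPixel k q) :=
  let ⟨hp, d, hd, ht⟩ := h
  ⟨(mem_scaleB_iff hk).1 hp, d, hd, ht.map_superPixel hk hd⟩

end superPixel

theorem GF.mem_right {C : Finset (ℤ × ℤ)} {p q : ℤ × ℤ} (h : GF C p q) : q ∈ C := by
  obtain ⟨-, d, -, ⟨n, rfl, hseg⟩, -⟩ := h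
  exact hseg n le_rfl

theorem ExtR.mem_of_GF {C : Finset (ℤ × ℤ)} {S : Set (ℤ × ℤ)} {p q : ℤ × ℤ}
    (h : ExtR (GF C) S (some p) (some q)) : q ∈ C :=
  h.elim GF.mem_right fun h => h.1.1

section Arborescence

variable {α β : Type*}

theorem ExtR.map {G : α → α → Prop} {G' : β → β → Prop} {S : Set α} {S' : Set β} {φ : α → β}
    (hG : ∀ p q, G p q → G' (φ p) (φ q)) (hS : Set.MapsTo φ S S') {p : α} {x : Option α}
    (h : ExtR G S (some p) x) : ExtR G' S' (some (φ p)) (x.map φ) := by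
  cases x with
  | none => exact hS h
  | some q =>
    rcases h with h | ⟨h, -⟩
    · exact Or.inl (hG _ _ h)
    · exact (em (G' (φ p) (φ q))).imp_right fun h' => ⟨hG _ _ h, h'⟩

theorem wR_map_le {G : α → α → Prop} {G' : β → β → Prop} {φ : α → β}
    (hG : ∀ p q, G p q → G' (φ p) (φ q)) (p : α) (x : Option α) :
    wR G' (φ p) (x.map φ) ≤ wR G p x := by
  cases x with
  | none => exact le_rfl
  | some q =>
    by_cases h : G p q
    · simp only [Option.map_some, wR, if_pos h, if_pos (hG _ _ h), le_refl]
    · simp only [Option.map_some, wR, if_neg h]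
      split_ifs <;> omega

theorem ostep_iterate_succ_some (f : α → Option α) (n : ℕ) (p : α) :
    (ostep f)^[n + 1] (some p) = (ostep f)^[n] (f p) :=
  Function.iterate_succ_apply _ _ _

theorem exists_iterate_ostep_eq_none_of_rank_lt {g : β → Option β} {E : Set β} (r : β → ℕ)
    (h : ∀ v ∈ E, ∀ u, g v = some u → u ∈ E ∧ r u < r v) :
    ∀ v ∈ E, ∃ n, (ostep g)^[n] (some v) = none := by
  intro v
  induction hr : r v using Nat.strong_induction_on generalizing v with
  | _ N ih =>
  intro hv
  rcases hgv : g v with _ | u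
  · exact ⟨1, by rw [ostep_iterate_succ_some, hgv]; rfl⟩
  · obtain ⟨hu, hlt⟩ := h v hv u hgv
    obtain ⟨n, hn⟩ := ih (r u) (hr ▸ hlt) u rfl hu
    exact ⟨n + 1, by rw [ostep_iterate_succ_some, hgv, hn]⟩

theorem weightOn_le_of_injOn [DecidableEq α] [DecidableEq β] {D : Finset α} {E : Finset β}
    {wD : α → Option α → ℕ} {wE : β → Option β → ℕ} {f : α → Option α} {g : β → Option β}
    {sel : β → α} (hmaps : Set.MapsTo sel E D) (hinj : Set.InjOn sel E)
    (hw : ∀ v ∈ E, wE v (g v) ≤ wD (sel v) (f (sel v))) :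
    weightOn E wE g ≤ weightOn D wD f :=
  calc weightOn E wE g
      ≤ ∑ v ∈ E, wD (sel v) (f (sel v)) := Finset.sum_le_sum hw
    _ = ∑ p ∈ E.image sel, wD p (f p) := (Finset.sum_image (f := fun p => wD p (f p)) hinj).symm
    _ ≤ weightOn D wD f := Finset.sum_le_sum_of_subset fun p hp => by
        obtain ⟨v, hv, rfl⟩ := Finset.mem_image.1 hp
        exact hmaps hv

theorem IsArbOn.exists_image [Nonempty α] [DecidableEq α] [DecidableEq β] {D : Finset α}
    {G : Option α → Option α → Prop} {f : α → Option α} (hf : IsArbOn D G f)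
    (hD : ∀ p ∈ D, ∀ q, G (some p) (some q) → q ∈ D) (φ : α → β)
    {H : Option β → Option β → Prop} (hH : ∀ p ∈ D, ∀ x, G (some p) x → H (some (φ p)) (x.map φ))
    (wG : α → Option α → ℕ) (wH : β → Option β → ℕ)
    (hw : ∀ p ∈ D, ∀ x, G (some p) x → wH (φ p) (x.map φ) ≤ wG p x) :
    ∃ g, IsArbOn (D.image φ) H g ∧ weightOn (D.image φ) wH g ≤ weightOn D wG f := by
  obtain ⟨hedge, hreach⟩ := hf
  set escapeTimes : β → Set ℕ := fun v => {n | ∃ p ∈ D, φ p = v ∧ (ostep f)^[n] (some p) = none}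
  set rank : β → ℕ := fun v => sInf (escapeTimes v)
  have hrank_le : ∀ p ∈ D, ∀ n, (ostep f)^[n] (some p) = none → rank (φ p) ≤ n :=
    fun p hp n hn => Nat.sInf_le ⟨p, hp, rfl, hn⟩
  have hfastest : ∀ v ∈ D.image φ, ∃ p ∈ D, φ p = v ∧ (ostep f)^[rank v] (some p) = none := by
    intro v hv
    obtain ⟨p, hp, rfl⟩ := Finset.mem_image.1 hv
    obtain ⟨n, hn⟩ := hreach p hp
    exact Nat.sInf_mem (s := escapeTimes (φ p)) ⟨n, p, hp, rfl, hn⟩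
  choose! sel hselD hselφ hselr using hfastest
  have hrank : ∀ v ∈ D.image φ, ∀ u, (f (sel v)).map φ = some u →
      u ∈ D.image φ ∧ rank u < rank v := by
    intro v hv u hu
    obtain ⟨q, hq, rfl⟩ := Option.map_eq_some_iff.1 hu
    have hqD := hD _ (hselD v hv) q (hq ▸ hedge _ (hselD v hv))
    refine ⟨Finset.mem_image_of_mem φ hqD, ?_⟩
    obtain ⟨N, hN⟩ : ∃ N, rank v = N + 1 := by
      refine Nat.exists_eq_succ_of_ne_zero fun h0 => ?_
      simpa [h0] using hselr v hv
    have hqN := hselr v hv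
    rw [hN, ostep_iterate_succ_some, hq] at hqN
    have := hrank_le q hqD N hqN
    omega
  refine ⟨fun v => (f (sel v)).map φ, ⟨fun v hv => ?_,
    exists_iterate_ostep_eq_none_of_rank_lt rank hrank⟩, weightOn_le_of_injOn
      (fun v hv => hselD v hv) (fun a ha b hb hab => by rw [← hselφ a ha, ← hselφ b hb, hab])
      fun v hv => ?_⟩
  · have := hH _ (hselD v hv) _ (hedge _ (hselD v hv))
    rwa [hselφ v hv] at this
  · have := hw _ (hselD v hv) _ (hedge _ (hselD v hv))
    rwa [hselφ v hv] at this

end Arborescence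

theorem stmt12_general (k : ℕ) (hk : 1 ≤ k) (B S : Finset (ℤ × ℤ))
    (f : ℤ × ℤ → Option (ℤ × ℤ))
    (hf : IsArbOn (scaleB k B) (ExtR (GF (scaleB k B)) ↑(scaleB k S)) f) :
    ∃ g : ℤ × ℤ → Option (ℤ × ℤ),
      IsArbOn B (ExtR (GF B) ↑S) g ∧
      weightOn B (wR (GF B)) g ≤ weightOn (scaleB k B) (wR (GF (scaleB k B))) f := by
  have hGF : ∀ p q, GF (scaleB k B) p q → GF B (superPixel k p) (superPixel k q) :=
    fun _ _ => GF.map_superPixel hk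
  obtain ⟨g, hg, hw⟩ := hf.exists_image (fun _ _ _ h => h.mem_of_GF) (superPixel k)
    (fun _ _ _ h => h.map hGF fun _ hp => (mem_scaleB_iff hk).1 hp)
    _ _ (fun p _ x _ => wR_map_le hGF p x)
  rw [image_superPixel_scaleB hk] at hg hw
  exact ⟨g, hg, hw⟩

/-- If the extended full tilt graph of the `k`-scaled board `B^(k)` has a
spanning arborescence converging to its root of weight `w`, then the extended
full tilt graph of `B` has one of weight at most `w`. -/
theorem stmt12 (k : ℕ) (hk : 1 ≤ k) (B S : Finset (ℤ × ℤ)) (hS : S ⊆ B)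
    (f : ℤ × ℤ → Option (ℤ × ℤ))
    (hf : IsArbOn (scaleB k B) (ExtR (GF (scaleB k B)) ↑(scaleB k S)) f) :
    ∃ g : ℤ × ℤ → Option (ℤ × ℤ),
      IsArbOn B (ExtR (GF B) ↑S) g ∧
      weightOn B (wR (GF B)) g ≤ weightOn (scaleB k B) (wR (GF (scaleB k B))) f :=
  stmt12_general k hk B S f hf
end
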